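/- arXiv:2106.00989 — 2 statements merged into one kernel-verified Lean document; each statement's English description precedes it below -/
import Mathlib

section
/- For all (φ,φ̄), (ψ,ψ̄) ∈ G(T,R), one has d(φ∘ψ) = d(φ) + d(ψ). -/
open Module Submodule

noncomputable section

abbrev TT : Type := (ℕ → ℂ) × (ℕ →₀ ℂ)
abbrev RR : Type := (ℕ →₀ ℂ) × (ℕ → ℂ)

lemma lc_v_add (v w : ℕ → ℂ) (l : ℕ →₀ ℂ) :
    Finsupp.linearCombination ℂ (v + w) l
      = Finsupp.linearCombination ℂ v l + Finsupp.linearCombination ℂ w l := by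
  classical
  simp only [Finsupp.linearCombination_apply]
  rw [← Finsupp.sum_add]
  exact Finsupp.sum_congr fun i _ => by simp [Pi.add_apply, smul_add, mul_add]

lemma lc_v_smul (c : ℂ) (v : ℕ → ℂ) (l : ℕ →₀ ℂ) :
    Finsupp.linearCombination ℂ (c • v) l = c • Finsupp.linearCombination ℂ v l := by
  classical
  simp only [Finsupp.linearCombination_apply, Finsupp.smul_sum]
  exact Finsupp.sum_congr fun i _ => by simp [Pi.smul_apply, smul_comm, smul_eq_mul, mul_left_comm]

/-- The nondegenerate pairing `p : T × R → ℂ`,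
`p((ω,u),(w,ν)) = Σ_i ω(i)w(i) + Σ_i u(i)ν(i)`. -/
def pairB : TT →ₗ[ℂ] RR →ₗ[ℂ] ℂ :=
  LinearMap.mk₂ ℂ
    (fun x y => Finsupp.linearCombination ℂ x.1 y.1 + Finsupp.linearCombination ℂ y.2 x.2)
    (fun x x' y => by
      simp only [Prod.fst_add, Prod.snd_add, lc_v_add, map_add]; ring)
    (fun c x y => by
      simp only [Prod.smul_fst, Prod.smul_snd, lc_v_smul, map_smul, smul_add])
    (fun x y y' => by
      simp only [Prod.fst_add, Prod.snd_add, lc_v_add, map_add]; ring)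
    (fun c x y => by
      simp only [Prod.smul_fst, Prod.smul_snd, lc_v_smul, map_smul, smul_add])

/-- The Mackey-group condition on a pair of automorphisms:
`p(φ x, y) = p(x, φ̄ y)` for all `x ∈ T`, `y ∈ R`. -/
def IsMackey (φ : TT ≃ₗ[ℂ] TT) (ψ : RR ≃ₗ[ℂ] RR) : Prop :=
  ∀ (x : TT) (y : RR), pairB (φ x) y = pairB x (ψ y)

/-- `W^♯ = (ℕ→ℂ) × {0} ⊆ T`. -/
def Wsharp : Submodule ℂ TT := LinearMap.range (LinearMap.inl ℂ (ℕ → ℂ) (ℕ →₀ ℂ))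

/-- `U^♯ = {0} × (ℕ→ℂ) ⊆ R`. -/
def Usharp : Submodule ℂ RR := LinearMap.range (LinearMap.inr ℂ (ℕ →₀ ℂ) (ℕ → ℂ))

/-- `V = (ℕ→₀ℂ) × (ℕ→₀ℂ) ⊆ T`. -/
def Vsub : Submodule ℂ TT :=
  LinearMap.range
    ((Finsupp.lcoeFun : (ℕ →₀ ℂ) →ₗ[ℂ] (ℕ → ℂ)).prodMap
      (LinearMap.id : (ℕ →₀ ℂ) →ₗ[ℂ] (ℕ →₀ ℂ)))

/-- `W = (ℕ→₀ℂ) × {0} ⊆ T`. -/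
def Wsub : Submodule ℂ TT :=
  LinearMap.range
    ((LinearMap.inl ℂ (ℕ → ℂ) (ℕ →₀ ℂ)).comp
      (Finsupp.lcoeFun : (ℕ →₀ ℂ) →ₗ[ℂ] (ℕ → ℂ)))

/-- `π_U : T → (ℕ→₀ℂ)`, the second projection. -/
def piU : TT →ₗ[ℂ] (ℕ →₀ ℂ) := LinearMap.snd ℂ (ℕ → ℂ) (ℕ →₀ ℂ)

/-- `π_{W*} : R → (ℕ→₀ℂ)`, the first projection. -/
def piW : RR →ₗ[ℂ] (ℕ →₀ ℂ) := LinearMap.fst ℂ (ℕ →₀ ℂ) (ℕ → ℂ)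

/-- The degree `d(φ) = dim π_U(φ(W^♯)) − dim π_U(φ^{-1}(W^♯))`. -/
def deg (φ : TT ≃ₗ[ℂ] TT) : ℤ :=
  (Module.finrank ℂ ((Wsharp.map φ.toLinearMap).map piU) : ℤ) -
    (Module.finrank ℂ ((Wsharp.map φ.symm.toLinearMap).map piU) : ℤ)

/-- `span {(δ_i, 0) : i ≥ n} ⊆ T`. -/
def tailSpan (n : ℕ) : Submodule ℂ TT :=
  Submodule.span ℂ
    ((fun i => ((((Finsupp.single i (1 : ℂ)) : ℕ →₀ ℂ) : ℕ → ℂ), (0 : ℕ →₀ ℂ))) '' {i | n ≤ i})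

/-- `W'` is E-commensurable of index `k` with `W`:
`W' = G ⊕ span{(δ_i,0) : i ≥ n}` with `G ⊆ V` finite-dimensional of dimension `n + k`. -/
def Ecomm (W' : Submodule ℂ TT) (k : ℤ) : Prop :=
  ∃ (n : ℕ) (G : Submodule ℂ TT), G ≤ Vsub ∧ FiniteDimensional ℂ G ∧
    (Module.finrank ℂ G : ℤ) = (n : ℤ) + k ∧ Disjoint G (tailSpan n) ∧
    W' = G ⊔ tailSpan n

/-- `W'^⊥ = {y ∈ R : p(x,y) = 0 for all x ∈ W'}`. -/
def perpR (W' : Submodule ℂ TT) : Submodule ℂ RR :=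
  ⨅ x ∈ (W' : Set TT), LinearMap.ker (pairB x)

/-- `Y^⊥ = {x ∈ T : p(x,y) = 0 for all y ∈ Y}`. -/
def perpT (Y : Submodule ℂ RR) : Submodule ℂ TT :=
  ⨅ y ∈ (Y : Set RR), LinearMap.ker (pairB.flip y)

/-- The action `φ·W' = φ((W'^⊥)^⊥) ∩ V`. -/
def actOn (φ : TT ≃ₗ[ℂ] TT) (W' : Submodule ℂ TT) : Submodule ℂ TT :=
  ((perpT (perpR W')).map φ.toLinearMap) ⊓ Vsub

end

/-
Call subspaces `A`, `K` of a vector space commensurable when `A/(A ∩ K)` and `K/(A ∩ K)` are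
finite dimensional, and put `[A : K] := dim A/(A ∩ K) - dim K/(A ∩ K)`. Measuring everything
against `D = A ∩ B ∩ K` gives the cocycle identity `[A : K] = [A : B] + [B : K]`, and `[·:·]` is
invariant under linear automorphisms. Since `W^♯ = ker π_U`, one has `d(φ) = [φ W^♯ : W^♯]`, so
`d(φ₁ φ₂) = [φ₁ φ₂ W^♯ : φ₁ W^♯] + [φ₁ W^♯ : W^♯] = d(φ₂) + d(φ₁)`.

The Mackey condition is what makes `φ W^♯` commensurable with `W^♯`: the map
`ω ↦ π_U φ(ω, 0)` has the transpose `ν ↦ π_{W*} φ̄(0, ν)`, again `(ℕ → ℂ) → (ℕ →₀ ℂ)`, and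
pairing with `ν = (tⁱ)` turns a finitely supported vector into a polynomial evaluated at `t`.
As `ℂ` is uncountable, one `t` avoids the roots of countably many nonzero polynomials, which
forces the map to vanish on all `ω` supported beyond some index `n`; hence it has finite rank.
-/

namespace Submodule

variable {k M N : Type*} [DivisionRing k] [AddCommGroup M] [Module k M]
  [AddCommGroup N] [Module k N]

theorem finrank_map_add_finrank_inf_ker (f : M →ₗ[k] N) (V : Submodule k M)
    [FiniteDimensional k V] :
    finrank k (V.map f) + finrank k (V ⊓ LinearMap.ker f : Submodule k M) = finrank k V := by
  rw [← (f.domRestrict V).finrank_range_add_finrank_ker, LinearMap.range_domRestrict,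
    LinearMap.ker_domRestrict, ← map_comap_subtype, finrank_map_subtype_eq]

variable {A D K : Submodule k M}

theorem map_map_mkQ_factor (hD : D ≤ K) : (A.map D.mkQ).map (factor hD) = A.map K.mkQ := by
  rw [← map_comp, factor_comp_mk]

theorem map_mkQ_inf_ker_factor (hD : D ≤ K) :
    A.map D.mkQ ⊓ LinearMap.ker (factor hD) = (A ⊓ K).map D.mkQ := by
  rw [factor, ker_mapQ, comap_id, map_inf_eq_map_inf_comap, comap_map_mkQ,
    sup_eq_right.mpr hD]

theorem finiteDimensional_map_mkQ_of_le (hD : D ≤ K) (hA : FiniteDimensional k (A.map K.mkQ))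
    (hAK : FiniteDimensional k ((A ⊓ K).map D.mkQ)) : FiniteDimensional k (A.map D.mkQ) := by
  rw [← fg_iff_finiteDimensional] at *
  refine fg_of_fg_map_of_fg_inf_ker (factor hD) ?_ ?_
  · rwa [map_map_mkQ_factor]
  · rwa [map_mkQ_inf_ker_factor]

theorem finrank_map_mkQ_of_le (hD : D ≤ K) [FiniteDimensional k (A.map D.mkQ)] :
    finrank k (A.map D.mkQ) = finrank k (A.map K.mkQ) + finrank k ((A ⊓ K).map D.mkQ) := by
  rw [← finrank_map_add_finrank_inf_ker (factor hD), map_map_mkQ_factor, map_mkQ_inf_ker_factor]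

theorem finiteDimensional_map_mkQ_inf_inf {B : Submodule k M}
    (hAB : FiniteDimensional k (A.map B.mkQ)) (hABK : FiniteDimensional k ((A ⊓ B).map K.mkQ)) :
    FiniteDimensional k (A.map (A ⊓ B ⊓ K).mkQ) := by
  refine finiteDimensional_map_mkQ_of_le (inf_le_left.trans inf_le_right) hAB ?_
  refine finiteDimensional_map_mkQ_of_le inf_le_right hABK ?_
  rw [mkQ_map_self]
  infer_instance

def Commensurable (A K : Submodule k M) : Prop :=
  FiniteDimensional k (A.map K.mkQ) ∧ FiniteDimensional k (K.map A.mkQ)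

/-- `A.map K.mkQ` is a copy of `A/(A ∩ K)` inside `M ⧸ K`. Unless `A` and `K` are commensurable,
`finrank` turns an infinite dimension into the junk value `0`. -/
noncomputable def relDim (A K : Submodule k M) : ℤ :=
  finrank k (A.map K.mkQ) - finrank k (K.map A.mkQ)

theorem relDim_eq_of_le_inf (hD : D ≤ A ⊓ K) [FiniteDimensional k (A.map D.mkQ)]
    [FiniteDimensional k (K.map D.mkQ)] :
    relDim A K = finrank k (A.map D.mkQ) - finrank k (K.map D.mkQ) := by
  rw [finrank_map_mkQ_of_le (A := A) (hD.trans inf_le_right),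
    finrank_map_mkQ_of_le (A := K) (hD.trans inf_le_left), inf_comm K A, relDim]
  push_cast
  ring

theorem relDim_add {B : Submodule k M} (hAB : Commensurable A B) (hBK : Commensurable B K) :
    relDim A B + relDim B K = relDim A K := by
  obtain ⟨hAB, hBA⟩ := hAB
  obtain ⟨hBK, hKB⟩ := hBK
  have hA : FiniteDimensional k (A.map (A ⊓ B ⊓ K).mkQ) :=
    finiteDimensional_map_mkQ_inf_inf hAB
      (finiteDimensional_of_le (map_mono (inf_le_right : A ⊓ B ≤ B)))
  have hB : FiniteDimensional k (B.map (A ⊓ B ⊓ K).mkQ) := by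
    rw [inf_comm A B]
    exact finiteDimensional_map_mkQ_inf_inf hBA
      (finiteDimensional_of_le (map_mono (inf_le_left : B ⊓ A ≤ B)))
  have hK : FiniteDimensional k (K.map (A ⊓ B ⊓ K).mkQ) := by
    rw [show A ⊓ B ⊓ K = K ⊓ B ⊓ A by ac_rfl]
    exact finiteDimensional_map_mkQ_inf_inf hKB
      (finiteDimensional_of_le (map_mono (inf_le_right : K ⊓ B ≤ B)))
  rw [relDim_eq_of_le_inf (D := A ⊓ B ⊓ K) inf_le_left,
    relDim_eq_of_le_inf (D := A ⊓ B ⊓ K) (le_inf (inf_le_left.trans inf_le_right) inf_le_right),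
    relDim_eq_of_le_inf (D := A ⊓ B ⊓ K) (le_inf (inf_le_left.trans inf_le_left) inf_le_right)]
  ring

theorem map_map_mkQ_equiv (e : M ≃ₗ[k] N) (A K : Submodule k M) :
    (A.map e.toLinearMap).map (K.map e.toLinearMap).mkQ
      = (A.map K.mkQ).map (Quotient.equiv K _ e rfl).toLinearMap := by
  rw [← map_comp, ← map_comp]
  rfl

theorem map_mkQ_map_equiv_symm (e : M ≃ₗ[k] N) (A : Submodule k N) (K : Submodule k M) :
    A.map (K.map e.toLinearMap).mkQ
      = ((A.map e.symm.toLinearMap).map K.mkQ).map (Quotient.equiv K _ e rfl).toLinearMap := by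
  have h := map_map_mkQ_equiv e (A.map e.symm.toLinearMap) K
  rwa [(map_symm_eq_iff e).mp rfl] at h

theorem Commensurable.map (e : M ≃ₗ[k] N) (h : Commensurable A K) :
    Commensurable (A.map e.toLinearMap) (K.map e.toLinearMap) := by
  obtain ⟨hAK, hKA⟩ := h
  rw [Commensurable, map_map_mkQ_equiv, map_map_mkQ_equiv]
  exact ⟨inferInstance, inferInstance⟩

theorem relDim_map (e : M ≃ₗ[k] N) (A K : Submodule k M) :
    relDim (A.map e.toLinearMap) (K.map e.toLinearMap) = relDim A K := by
  rw [relDim, map_map_mkQ_equiv, map_map_mkQ_equiv, LinearEquiv.finrank_map_eq,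
    LinearEquiv.finrank_map_eq, relDim]

theorem map_mkQ_ker_eq {f : M →ₗ[k] N} (hf : Function.Surjective f) (A : Submodule k M) :
    A.map (LinearMap.ker f).mkQ
      = (A.map f).map (f.quotKerEquivOfSurjective hf).symm.toLinearMap := by
  rw [← map_comp]
  congr 1
  ext x
  simp

theorem finrank_map_mkQ_of_ker_eq {f : M →ₗ[k] N} (hf : Function.Surjective f)
    (hK : LinearMap.ker f = K) (A : Submodule k M) :
    finrank k (A.map K.mkQ) = finrank k (A.map f) := by
  subst hK
  rw [map_mkQ_ker_eq hf, LinearEquiv.finrank_map_eq]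

theorem finiteDimensional_map_mkQ_of_ker_eq {f : M →ₗ[k] N} (hf : Function.Surjective f)
    (hK : LinearMap.ker f = K) (A : Submodule k M) [FiniteDimensional k (A.map f)] :
    FiniteDimensional k (A.map K.mkQ) := by
  subst hK
  rw [map_mkQ_ker_eq hf]
  infer_instance

end Submodule

open Finsupp

section Transpose

variable {F : Type*} [Field F]

theorem Finsupp.finite_setOf_linearCombination_pow_eq_zero {f : ℕ →₀ F} (hf : f ≠ 0) :
    {t : F | linearCombination F (t ^ ·) f = 0}.Finite := by
  have hp : (⟨AddMonoidAlgebra.ofCoeff f⟩ : Polynomial F) ≠ 0 := by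
    simpa [Polynomial.ofFinsupp_eq_zero] using hf
  convert Polynomial.finite_setOfPred_isRoot hp using 3 with t
  rw [Polynomial.IsRoot, Polynomial.eval_eq_sum, linearCombination_apply]
  rfl

theorem Finsupp.exists_forall_linearCombination_pow_ne_zero [Uncountable F]
    {f : ℕ → ℕ →₀ F} (hf : ∀ n, f n ≠ 0) :
    ∃ t : F, ∀ n, linearCombination F (t ^ ·) (f n) ≠ 0 := by
  have hcount : (⋃ n, {t : F | linearCombination F (t ^ ·) (f n) = 0}).Countable :=
    Set.countable_iUnion fun n => (finite_setOf_linearCombination_pow_eq_zero (hf n)).countable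
  obtain ⟨t, ht⟩ := (Set.ne_univ_iff_exists_notMem _).mp
    fun h => Set.not_countable_univ (h ▸ hcount : (Set.univ : Set F).Countable)
  exact ⟨t, by simpa using ht⟩

theorem LinearMap.finiteDimensional_range_of_eq_zero_of_forall_lt {N : Type*} [AddCommGroup N]
    [Module F N] (C : (ℕ → F) →ₗ[F] N) (n : ℕ)
    (hC : ∀ ω : ℕ → F, (∀ i < n, ω i = 0) → C ω = 0) : FiniteDimensional F (range C) := by
  have := FiniteDimensional.span_of_finite F ((Set.finite_Iio n).image fun i => C (Pi.single i 1))
  refine Submodule.finiteDimensional_of_le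
    (?_ : range C ≤ Submodule.span F ((fun i => C (Pi.single i 1)) '' Set.Iio n))
  rintro _ ⟨ω, rfl⟩
  have hω : C ω = C (∑ i ∈ Finset.range n, ω i • Pi.single i (1 : F)) := by
    rw [← sub_eq_zero, ← map_sub]
    refine hC _ fun j hj => ?_
    simp [Finset.sum_apply, Pi.single_apply, hj]
  rw [hω, map_sum]
  refine Submodule.sum_mem _ fun i hi => ?_
  rw [map_smul]
  exact Submodule.smul_mem _ _
    (Submodule.subset_span (Set.mem_image_of_mem _ (Finset.mem_range.mp hi)))

theorem Finsupp.exists_eq_zero_of_forall_lt_of_linearCombination_eq [Uncountable F]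
    {C D : (ℕ → F) →ₗ[F] ℕ →₀ F}
    (h : ∀ ω ν, linearCombination F ν (C ω) = linearCombination F ω (D ν)) :
    ∃ n, ∀ ω : ℕ → F, (∀ i < n, ω i = 0) → C ω = 0 := by
  by_contra! hC
  choose ω hω hCω using hC
  obtain ⟨t, ht⟩ := exists_forall_linearCombination_pow_ne_zero hCω
  obtain ⟨n, hn⟩ := (D (t ^ ·)).support.exists_nat_subset_range
  refine ht n ?_
  rw [h, linearCombination_apply]
  exact Finset.sum_eq_zero fun i hi => by
    simp only [hω n i (Finset.mem_range.mp (hn hi)), smul_zero]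

theorem Finsupp.finiteDimensional_range_of_linearCombination_eq [Uncountable F]
    {C D : (ℕ → F) →ₗ[F] ℕ →₀ F}
    (h : ∀ ω ν, linearCombination F ν (C ω) = linearCombination F ω (D ν)) :
    FiniteDimensional F (LinearMap.range C) :=
  have ⟨n, hn⟩ := exists_eq_zero_of_forall_lt_of_linearCombination_eq h
  C.finiteDimensional_range_of_eq_zero_of_forall_lt n hn

end Transpose

theorem ker_piU : LinearMap.ker piU = Wsharp := (LinearMap.range_inl ℂ _ _).symm

theorem piU_surjective : Function.Surjective piU := LinearMap.snd_surjective

theorem deg_eq_relDim (φ : TT ≃ₗ[ℂ] TT) : deg φ = relDim (Wsharp.map φ.toLinearMap) Wsharp := by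
  rw [deg, relDim, map_mkQ_map_equiv_symm, LinearEquiv.finrank_map_eq,
    finrank_map_mkQ_of_ker_eq piU_surjective ker_piU,
    finrank_map_mkQ_of_ker_eq piU_surjective ker_piU]

namespace IsMackey

variable {φ : TT ≃ₗ[ℂ] TT} {ψ : RR ≃ₗ[ℂ] RR}

theorem symm (h : IsMackey φ ψ) : IsMackey φ.symm ψ.symm := fun x y => by
  simpa using (h (φ.symm x) (ψ.symm y)).symm

theorem finiteDimensional_map_piU (h : IsMackey φ ψ) :
    FiniteDimensional ℂ ((Wsharp.map φ.toLinearMap).map piU) := by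
  let C := piU ∘ₗ φ.toLinearMap ∘ₗ LinearMap.inl ℂ (ℕ → ℂ) (ℕ →₀ ℂ)
  let D := piW ∘ₗ ψ.toLinearMap ∘ₗ LinearMap.inr ℂ (ℕ →₀ ℂ) (ℕ → ℂ)
  have hC : LinearMap.range C = (Wsharp.map φ.toLinearMap).map piU := by
    simp only [C, Wsharp, LinearMap.range_comp]
  rw [← hC]
  have : Uncountable ℂ := Set.not_countable_univ_iff.mp not_countable_complex
  refine Finsupp.finiteDimensional_range_of_linearCombination_eq (D := D) fun ω ν => ?_
  simpa [pairB, C, D, piU, piW] using h (ω, 0) (0, ν)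

theorem finiteDimensional_map_map_mkQ (h : IsMackey φ ψ) :
    FiniteDimensional ℂ ((Wsharp.map φ.toLinearMap).map Wsharp.mkQ) :=
  have := h.finiteDimensional_map_piU
  finiteDimensional_map_mkQ_of_ker_eq piU_surjective ker_piU _

theorem commensurable (h : IsMackey φ ψ) : Commensurable (Wsharp.map φ.toLinearMap) Wsharp := by
  refine ⟨h.finiteDimensional_map_map_mkQ, ?_⟩
  have := h.symm.finiteDimensional_map_map_mkQ
  rw [map_mkQ_map_equiv_symm]
  infer_instance

end IsMackey

/-- `d(φ∘ψ) = d(φ) + d(ψ)` for all `(φ,φ̄), (ψ,ψ̄) ∈ G(T,R)`. -/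
theorem stmt10 (φ₁ : TT ≃ₗ[ℂ] TT) (ψ₁ : RR ≃ₗ[ℂ] RR) (h₁ : IsMackey φ₁ ψ₁)
    (φ₂ : TT ≃ₗ[ℂ] TT) (ψ₂ : RR ≃ₗ[ℂ] RR) (h₂ : IsMackey φ₂ ψ₂) :
    deg (φ₂.trans φ₁) = deg φ₁ + deg φ₂ := by
  have hcomp : Wsharp.map (φ₂.trans φ₁).toLinearMap
      = (Wsharp.map φ₂.toLinearMap).map φ₁.toLinearMap := by
    rw [← map_comp]
    rfl
  rw [deg_eq_relDim, deg_eq_relDim, deg_eq_relDim, hcomp,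
    ← relDim_add (h₂.commensurable.map φ₁) h₁.commensurable, relDim_map, add_comm]
end

section
/- Say that a ℂ-linear map φ : T → T is represented by a matrix quadruple (A,B,C,D), with A,B,C,D : ℕ×ℕ → ℂ, if every row of A is finitely supported, every column of D is finitely supported, C has only finitely many nonzero entries (B is arbitrary), and φ(ω,u) = (i ↦ Σ_j A(i,j)ω(j) + Σ_j B(i,j)u(j), i ↦ Σ_j C(i,j)ω(j) + Σ_j D(i,j)u(j)) for all (ω,u) ∈ T, all sums being finite and the second component being finitely supported. Then a ℂ-linear automorphism φ of T admits a ℂ-linear automorphism φ̄ of R with (φ,φ̄) ∈ G(T,R) if and only if both φ and φ^{-1} are represented by such matrix quadruples. -/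
open Module Submodule

/-- `φ : T → T` is represented by the matrix quadruple `(A,B,C,D)`: the rows of `A` are
finitely supported, the columns of `D` are finitely supported, `C` has finitely many nonzero
entries, and `φ` acts by the usual matrix formula (all sums finite). -/
def RepBy (φ : TT →ₗ[ℂ] TT) (A B C D : ℕ → ℕ → ℂ) : Prop :=
  (∀ i, {j | A i j ≠ 0}.Finite) ∧
  (∀ j, {i | D i j ≠ 0}.Finite) ∧
  {q : ℕ × ℕ | C q.1 q.2 ≠ 0}.Finite ∧
  ∀ x : TT,
    (∀ i, (φ x).1 i = (∑ᶠ j, A i j * x.1 j) + ∑ᶠ j, B i j * x.2 j) ∧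
    (∀ i, (φ x).2 i = (∑ᶠ j, C i j * x.1 j) + ∑ᶠ j, D i j * x.2 j)

/-!
If `φ` has a Mackey partner `φ̄`, the matrix of `φ` is read off from `φ̄` on the standard vectors:
row `i` of `(A B)` is `φ̄ (eR i)` and row `i` of `(C D)` is `φ̄ (fR i)`. The rows of `A` and the
columns of `D` are then finitely supported automatically. For `C`, pairing `φ (eT j)` with
`(0, (tⁱ)ᵢ)` shows that for each `t ∈ ℂ` only finitely many of the polynomials `∑ᵢ C i j Xⁱ` are
nonzero at `t`; as `ℂ` is uncountable, only finitely many of them are nonzero.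

Conversely, the finiteness conditions make each functional `x ↦ p (φ x, y)` depend on only
finitely many coordinates of `x.1`, which is exactly what makes it of the form `p (·, z)`. The
resulting adjoints of `φ` and `φ⁻¹` are linear and mutually inverse because `p` separates points
of `R`.
-/

theorem finsum_mul_eq_zero_of_forall {ι R : Type*} [NonUnitalNonAssocSemiring R] {a b : ι → R}
    (h : ∀ j, a j ≠ 0 → b j = 0) : ∑ᶠ j, a j * b j = 0 :=
  finsum_eq_zero_of_forall_eq_zero fun j => by
    by_cases ha : a j = 0 <;> simp [ha, h j]

section Adjoint

variable {R M N : Type*} [CommRing R] [AddCommGroup M] [Module R M] [AddCommGroup N] [Module R N]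
  (B : M →ₗ[R] N →ₗ[R] R)

def HasAdjoint (f : M → M) : Prop :=
  ∀ y : N, ∃ z : N, ∀ x, B (f x) y = B x z

variable {B}

theorem LinearMap.SeparatingRight.eq_of_forall_apply_eq (hB : B.SeparatingRight) {z z' : N}
    (h : ∀ x, B x z = B x z') : z = z' :=
  sub_eq_zero.mp <| hB _ fun x => by rw [map_sub, h, sub_self]

theorem hasAdjoint_of_exists_equiv {φ : M ≃ₗ[R] M} {ψ : N ≃ₗ[R] N}
    (h : ∀ x y, B (φ x) y = B x (ψ y)) : HasAdjoint B φ ∧ HasAdjoint B φ.symm :=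
  ⟨fun y => ⟨ψ y, fun x => h x y⟩, fun y => ⟨ψ.symm y, fun x => by
    simpa using (h (φ.symm x) (ψ.symm y)).symm⟩⟩

theorem exists_equiv_of_hasAdjoint (hB : B.SeparatingRight) {φ : M ≃ₗ[R] M}
    (h : HasAdjoint B φ) (hsymm : HasAdjoint B φ.symm) :
    ∃ ψ : N ≃ₗ[R] N, ∀ x y, B (φ x) y = B x (ψ y) := by
  choose g hg using h
  choose g' hg' using hsymm
  refine ⟨
    { toFun := g
      invFun := g'
      map_add' := fun y y' => hB.eq_of_forall_apply_eq fun x => by simp only [← hg, map_add]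
      map_smul' := fun c y => hB.eq_of_forall_apply_eq fun x => by
        simp only [← hg, map_smul]; rfl
      left_inv := fun y => hB.eq_of_forall_apply_eq fun x => by
        rw [← hg', ← hg, LinearEquiv.apply_symm_apply]
      right_inv := fun y => hB.eq_of_forall_apply_eq fun x => by
        rw [← hg, ← hg', LinearEquiv.symm_apply_apply] }, fun x y => hg y x⟩

theorem exists_equiv_iff_hasAdjoint (hB : B.SeparatingRight) (φ : M ≃ₗ[R] M) :
    (∃ ψ : N ≃ₗ[R] N, ∀ x y, B (φ x) y = B x (ψ y)) ↔ HasAdjoint B φ ∧ HasAdjoint B φ.symm :=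
  ⟨fun ⟨_, h⟩ => hasAdjoint_of_exists_equiv h, fun h => exists_equiv_of_hasAdjoint hB h.1 h.2⟩

end Adjoint

theorem Polynomial.finite_setOf_ne_zero_of_forall_finite_eval {K ι : Type*} [Field K]
    [Uncountable K] [Countable ι] (P : ι → Polynomial K) (h : ∀ t, {j | (P j).eval t ≠ 0}.Finite) :
    {j | P j ≠ 0}.Finite := by
  have hroots : (⋃ j ∈ {j | P j ≠ 0}, {t | (P j).IsRoot t}).Countable :=
    Set.Countable.biUnion (Set.to_countable _) fun j hj => (finite_setOfPred_isRoot hj).countable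
  obtain ⟨t, ht⟩ : ∃ t, t ∉ ⋃ j ∈ {j | P j ≠ 0}, {t | (P j).IsRoot t} := by
    by_contra! hall
    exact Set.not_countable_univ (hroots.mono fun t _ => hall t)
  refine (h t).subset fun j hj hroot => ht ?_
  exact Set.mem_biUnion hj hroot

theorem Polynomial.eval_basisMonomials_repr_symm {R : Type*} [CommSemiring R] (c : ℕ →₀ R)
    (t : R) : ((basisMonomials R).repr.symm c).eval t =
      Finsupp.linearCombination R (fun i => t ^ i) c := by
  simp [Basis.repr_symm_apply, Finsupp.linearCombination_apply, Finsupp.sum, eval_finsetSum]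

noncomputable def eT (j : ℕ) : TT := (Pi.single j 1, 0)
noncomputable def fT (j : ℕ) : TT := (0, Finsupp.single j 1)
noncomputable def eR (j : ℕ) : RR := (Finsupp.single j 1, 0)
noncomputable def fR (j : ℕ) : RR := (0, Pi.single j 1)

theorem pairB_apply (x : TT) (y : RR) :
    pairB x y = Finsupp.linearCombination ℂ x.1 y.1 + Finsupp.linearCombination ℂ y.2 x.2 :=
  rfl

theorem Finsupp.linearCombination_eq_finsum {ι R : Type*} [Semiring R] (v : ι → R)
    (l : ι →₀ R) : Finsupp.linearCombination R v l = ∑ᶠ j, l j * v j := by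
  rw [Finsupp.linearCombination_apply, Finsupp.sum, finsum_eq_sum_of_support_subset]
  · rfl
  · intro j hj
    simpa using left_ne_zero_of_mul hj

theorem pairB_eq_finsum (x : TT) (y : RR) :
    pairB x y = ∑ᶠ j, y.1 j * x.1 j + ∑ᶠ j, y.2 j * x.2 j := by
  simp only [pairB_apply, Finsupp.linearCombination_eq_finsum, mul_comm (x.2 _)]

@[simp] theorem pairB_eR (x : TT) (j : ℕ) : pairB x (eR j) = x.1 j := by simp [pairB_apply, eR]
@[simp] theorem pairB_fR (x : TT) (j : ℕ) : pairB x (fR j) = x.2 j := by simp [pairB_apply, fR]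
@[simp] theorem pairB_eT (y : RR) (j : ℕ) : pairB (eT j) y = y.1 j := by simp [pairB_apply, eT]
@[simp] theorem pairB_fT (y : RR) (j : ℕ) : pairB (fT j) y = y.2 j := by simp [pairB_apply, fT]

theorem pairB_separatingRight : pairB.SeparatingRight := fun y hy => by
  ext j
  · simpa using hy (eT j)
  · simpa using hy (fT j)

theorem finite_setOf_snd_ne_zero_of_hasAdjoint {f : TT →ₗ[ℂ] TT} (hf : HasAdjoint pairB f) :
    {j | (f (eT j)).2 ≠ 0}.Finite := by
  have : Uncountable ℂ := Complex.ofReal_injective.uncountable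
  have hP := Polynomial.finite_setOf_ne_zero_of_forall_finite_eval
    (fun j => (Polynomial.basisMonomials ℂ).repr.symm (f (eT j)).2) fun t => by
      obtain ⟨z, hz⟩ := hf (0, fun i => t ^ i)
      refine z.1.hasFiniteSupport.subset fun j hj => ?_
      have : pairB (f (eT j)) (0, fun i => t ^ i) = z.1 j := by rw [hz, pairB_eT]
      rw [Set.mem_ofPred_eq, Polynomial.eval_basisMonomials_repr_symm] at hj
      simpa [← this, pairB_apply] using hj
  simpa only [ne_eq, LinearEquiv.map_eq_zero_iff] using hP

theorem repBy_of_hasAdjoint {f : TT →ₗ[ℂ] TT} (hf : HasAdjoint pairB f) :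
    ∃ A B C D, RepBy f A B C D := by
  have hS := finite_setOf_snd_ne_zero_of_hasAdjoint hf
  choose g hg using hf
  refine ⟨fun i j => (g (eR i)).1 j, fun i j => (g (eR i)).2 j, fun i j => (g (fR i)).1 j,
    fun i j => (g (fR i)).2 j, fun i => (g (eR i)).1.hasFiniteSupport, fun j => ?_, ?_,
    fun x => ⟨fun i => ?_, fun i => ?_⟩⟩
  · refine (f (fT j)).2.hasFiniteSupport.subset fun i hi => ?_
    simpa [← pairB_fT, ← hg] using hi
  · refine ((hS.biUnion fun j _ => (f (eT j)).2.hasFiniteSupport).prod hS).subset ?_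
    rintro ⟨i, j⟩ hij
    have hij' : (f (eT j)).2 i ≠ 0 := by simpa [← pairB_eT, ← hg] using hij
    exact ⟨Set.mem_biUnion (fun h => hij' (by rw [h]; rfl)) hij', fun h => hij' (by rw [h]; rfl)⟩
  · rw [← pairB_eR, hg, pairB_eq_finsum]
  · rw [← pairB_fR, hg, pairB_eq_finsum]

theorem linearMap_eq_zero_of_finite_dependence {P : Type*} [AddCommGroup P] [Module ℂ P]
    (G : TT →ₗ[ℂ] P) (J : Finset ℕ) (hJ : ∀ ω : ℕ → ℂ, (∀ j ∈ J, ω j = 0) → G (ω, 0) = 0)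
    (he : ∀ j, G (eT j) = 0) (hf : ∀ j, G (fT j) = 0) : G = 0 := by
  have hinl : G ∘ₗ (LinearMap.inl ℂ _ _ ∘ₗ Finsupp.lcoeFun) = 0 :=
    Finsupp.lhom_ext fun j a => by
      have : (((Finsupp.single j a : ℕ →₀ ℂ) : ℕ → ℂ), (0 : ℕ →₀ ℂ)) = a • eT j := by
        ext <;> simp [eT, Finsupp.single_eq_pi_single, ← Pi.single_smul]
      simp [this, he]
  have hinr : G ∘ₗ LinearMap.inr ℂ _ _ = 0 :=
    Finsupp.lhom_ext fun j a => by
      have : ((0 : ℕ → ℂ), Finsupp.single j a) = a • fT j := by ext <;> simp [fT]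
      simp [this, hf]
  refine LinearMap.ext fun ⟨ω, u⟩ => ?_
  set ω₀ : ℕ →₀ ℂ := Finsupp.indicator J fun j _ => ω j
  have hsplit : ((ω, u) : TT) = ((ω₀ : ℕ → ℂ), 0) + (ω - ω₀, 0) + (0, u) := by ext <;> simp
  have hrest : G (ω - ω₀, 0) = 0 := hJ _ fun j hj => by simp [ω₀, Finsupp.indicator_apply, hj]
  rw [hsplit, map_add, map_add, hrest, LinearMap.zero_apply]
  simpa using congr($hinl ω₀ + $hinr u)

theorem exists_pairB_eq_of_finite_dependence (F : TT →ₗ[ℂ] ℂ) (J : Finset ℕ)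
    (hF : ∀ ω : ℕ → ℂ, (∀ j ∈ J, ω j = 0) → F (ω, 0) = 0) :
    ∃ z : RR, ∀ x, F x = pairB x z := by
  have hsupp : ∀ j, F (eT j) ≠ 0 → j ∈ J := fun j hj => by
    by_contra hjJ
    exact hj (hF _ fun k hk => Pi.single_eq_of_ne (by rintro rfl; exact hjJ hk) _)
  set z : RR := (Finsupp.onFinset J (fun j => F (eT j)) hsupp, fun j => F (fT j))
  have hz : ∀ ω : ℕ → ℂ, (∀ j ∈ J, ω j = 0) → pairB (ω, 0) z = 0 := fun ω hω => by
    rw [pairB_eq_finsum]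
    simp only [Finsupp.coe_zero, Pi.zero_apply, mul_zero, finsum_zero, add_zero]
    refine finsum_mul_eq_zero_of_forall fun j hj => hω j ?_
    by_contra hjJ
    exact hj (by simp [z, not_not.mp ((hsupp j).mt hjJ)])
  have hG := linearMap_eq_zero_of_finite_dependence (F - pairB.flip z) J
    (fun ω hω => by simp [hF ω hω, hz ω hω]) (fun j => by simp [z]) (fun j => by simp [z])
  exact ⟨z, fun x => sub_eq_zero.mp (LinearMap.congr_fun hG x)⟩

theorem RepBy.fst_apply_inl_eq_zero {f : TT →ₗ[ℂ] TT} {A B C D : ℕ → ℕ → ℂ}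
    (h : RepBy f A B C D) {ω : ℕ → ℂ} {i : ℕ} (hω : ∀ j, A i j ≠ 0 → ω j = 0) :
    (f (ω, 0)).1 i = 0 := by
  rw [(h.2.2.2 (ω, 0)).1 i]
  simp only [Finsupp.coe_zero, Pi.zero_apply, mul_zero, finsum_zero, add_zero]
  exact finsum_mul_eq_zero_of_forall hω

theorem RepBy.snd_apply_inl_eq_zero {f : TT →ₗ[ℂ] TT} {A B C D : ℕ → ℕ → ℂ}
    (h : RepBy f A B C D) {ω : ℕ → ℂ} (hω : ∀ i j, C i j ≠ 0 → ω j = 0) :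
    (f (ω, 0)).2 = 0 := by
  ext i
  rw [(h.2.2.2 (ω, 0)).2 i]
  simp only [Finsupp.coe_zero, Pi.zero_apply, mul_zero, finsum_zero, add_zero]
  exact finsum_mul_eq_zero_of_forall (hω i)

theorem hasAdjoint_of_repBy {f : TT →ₗ[ℂ] TT} {A B C D : ℕ → ℕ → ℂ} (h : RepBy f A B C D) :
    HasAdjoint pairB f := by
  intro y
  let J : Finset ℕ :=
    (y.1.support.biUnion fun i => (h.1 i).toFinset) ∪ h.2.2.1.toFinset.image Prod.snd
  refine exists_pairB_eq_of_finite_dependence ((pairB.flip y).comp f) J fun ω hω => ?_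
  have h1 : ∀ i, y.1 i ≠ 0 → (f (ω, 0)).1 i = 0 := fun i hi =>
    h.fst_apply_inl_eq_zero fun j hj => hω j <| Finset.mem_union_left _ <|
      Finset.mem_biUnion.mpr ⟨i, Finsupp.mem_support_iff.mpr hi, (h.1 i).mem_toFinset.mpr hj⟩
  have h2 : (f (ω, 0)).2 = 0 := h.snd_apply_inl_eq_zero fun i j hij => hω j <|
    Finset.mem_union_right _ <| Finset.mem_image.mpr ⟨(i, j), h.2.2.1.mem_toFinset.mpr hij, rfl⟩
  rw [LinearMap.comp_apply, LinearMap.flip_apply, pairB_eq_finsum, h2]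
  simp only [Finsupp.coe_zero, Pi.zero_apply, mul_zero, finsum_zero, add_zero]
  exact finsum_mul_eq_zero_of_forall h1

theorem hasAdjoint_iff_repBy (f : TT →ₗ[ℂ] TT) :
    HasAdjoint pairB f ↔ ∃ A B C D, RepBy f A B C D :=
  ⟨repBy_of_hasAdjoint, fun ⟨_, _, _, _, h⟩ => hasAdjoint_of_repBy h⟩

/-- A linear automorphism `φ` of `T` belongs to `G(T,R)` (i.e., admits a compatible `φ̄`)
iff both `φ` and `φ^{-1}` are represented by matrix quadruples as above. -/
theorem stmt13 (φ : TT ≃ₗ[ℂ] TT) :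
    (∃ ψ : RR ≃ₗ[ℂ] RR, IsMackey φ ψ) ↔
      ((∃ A B C D, RepBy φ.toLinearMap A B C D) ∧
       (∃ A B C D, RepBy φ.symm.toLinearMap A B C D)) := by
  rw [← hasAdjoint_iff_repBy, ← hasAdjoint_iff_repBy]
  exact exists_equiv_iff_hasAdjoint pairB_separatingRight φ
end
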